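/- If m + n ≥ 10, or (m,n) ∈ {(6,1), (5,2), (7,1), (6,2), (5,3), (4,4), (8,1), (2,7), (3,6), (4,5), (5,4), (6,3), (7,2), (4,1), (4,3), (5,1), (1,8)}, then the spider Sp(1^[m], 2^[n]) has local antimagic total chromatic number 3. -/

import Mathlib

open Finset

variable {V : Type*} [Fintype V] [DecidableEq V]

/-- The weight of a vertex `u` under the total labeling given by vertex labels `fv`
and edge labels `fe` : `w(u) = f(u) + \sum_{e incident to u} f(e)`. -/
def latWeight (G : SimpleGraph V) [DecidableRel G.Adj]
    (fv : V → ℕ) (fe : Sym2 V → ℕ) (u : V) : ℕ :=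
  fv u + ∑ v ∈ G.neighborFinset u, fe s(u, v)

/-- `fv, fe` together form a bijection from `V(G) ∪ E(G)` onto `{1, …, p + q}`,
where `p` is the order and `q` is the size of `G`. -/
def IsTotalLabeling (G : SimpleGraph V) [DecidableRel G.Adj]
    (fv : V → ℕ) (fe : Sym2 V → ℕ) : Prop :=
  Set.BijOn (Sum.elim fv (fun e : G.edgeSet => fe (e : Sym2 V))) Set.univ
    (Set.Icc 1 (Fintype.card V + G.edgeFinset.card))

/-- A local antimagic total labeling of `G` : a bijective total labeling such that any two
adjacent vertices get distinct weights. -/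
def IsLocalAntimagicTotal (G : SimpleGraph V) [DecidableRel G.Adj]
    (fv : V → ℕ) (fe : Sym2 V → ℕ) : Prop :=
  IsTotalLabeling G fv fe ∧
    ∀ ⦃u v : V⦄, G.Adj u v → latWeight G fv fe u ≠ latWeight G fv fe v

/-- The local antimagic total chromatic number `χ_lat(G)` : the minimum number of distinct
vertex weights taken over all local antimagic total labelings of `G`. -/
noncomputable def chiLat (G : SimpleGraph V) [DecidableRel G.Adj] : ℕ :=
  sInf {c | ∃ fv fe, IsLocalAntimagicTotal G fv fe ∧
    (Finset.univ.image (latWeight G fv fe)).card = c}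

instance {W : Type*} (r : W → W → Prop) [DecidableEq W] [DecidableRel r] :
    DecidableRel (SimpleGraph.fromRel r).Adj :=
  fun a b => decidable_of_iff _ (SimpleGraph.fromRel_adj r a b).symm

/-- Adjacency for the spider `Sp(1^[m], 2^[n])` : the center `x = none` is adjacent to each
leaf `y i = some (Sum.inl i)` and to each `u j = some (Sum.inr (j, false))`, and each `u j`
is adjacent to the leaf `v j = some (Sum.inr (j, true))`. -/
def spider12R (m n : ℕ) :
    Option (Fin m ⊕ Fin n × Bool) → Option (Fin m ⊕ Fin n × Bool) → Bool
  | none, some (Sum.inl _) => true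
  | none, some (Sum.inr (_, false)) => true
  | some (Sum.inr (j, false)), some (Sum.inr (j', true)) => decide (j = j')
  | _, _ => false

/-- The spider `Sp(1^[m], 2^[n])` with `m` legs of length `1` and `n` legs of length `2`. -/
abbrev spider12 (m n : ℕ) : SimpleGraph (Option (Fin m ⊕ Fin n × Bool)) :=
  SimpleGraph.fromRel (fun a b => spider12R m n a b = true)

/-!
A labeling with three weights exists: under `vertexLabel` and `edgeLabel` every leaf gets weight
`2m + 2n + 1`, every `u j` gets `5m + 7n + 2`, and the centre a larger weight.

Conversely, suppose there are at most two weights. Adjacency forces the centre `x` and the `v j`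
to share one weight `a`, and the `y i` and `u j` another weight `b`. Since `a = f(v j) + f(u j v j)`
is a sum of two distinct labels, `a < 2N` where `N = 2m + 4n + 1`. Any `k` distinct labels sum to
at least `k (k + 1) / 2`; applied to `x` with its `m + n` edges, to these with one `u j` whose `v j`
has a small label, and to parts of the total label sum `N (N + 1) / 2`, this gives further
inequalities in `a` and `b` that have no common solution under the hypothesis on `(m, n)`.
-/

theorem Finset.card_mul_card_add_one_le_two_mul_sum {s : Finset ℕ} (hs : 0 ∉ s) :
    #s * (#s + 1) ≤ 2 * ∑ i ∈ s, i := by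
  induction s using Finset.induction_on_max with
  | empty => simp
  | insert a s hlt ih =>
    have ha : a ∉ s := fun h => (hlt a h).false
    have hcard : #s + 1 ≤ a := by
      have ha0 : a ≠ 0 := fun h => hs (h ▸ mem_insert_self a s)
      have hsub : s ⊆ Ico 1 a := fun x hx =>
        mem_Ico.2 ⟨Nat.pos_of_ne_zero fun h => hs (h ▸ mem_insert_of_mem hx), hlt x hx⟩
      have := card_le_card hsub
      rw [Nat.card_Ico] at this
      omega
    rw [card_insert_of_notMem ha, sum_insert ha]
    nlinarith [ih fun h => hs (mem_insert_of_mem h)]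

section InjectiveLabels

variable {ι : Type*} [Fintype ι] {φ : ι → ℕ}

theorem Function.Injective.card_mul_card_add_one_le_two_mul_sum (hφ : Function.Injective φ)
    (hpos : ∀ i, 0 < φ i) : Fintype.card ι * (Fintype.card ι + 1) ≤ 2 * ∑ i, φ i := by
  classical
  have := Finset.card_mul_card_add_one_le_two_mul_sum (s := univ.image φ)
    (by simpa using fun i => (hpos i).ne')
  rwa [card_image_of_injective _ hφ, sum_image hφ.injOn, card_univ] at this

theorem Function.Injective.exists_add_card_le [Nonempty ι] {N : ℕ} (hφ : Function.Injective φ)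
    (hle : ∀ i, φ i ≤ N) : ∃ i, φ i + Fintype.card ι ≤ N + 1 := by
  classical
  obtain ⟨i, -, hi⟩ := univ.exists_min_image φ univ_nonempty
  refine ⟨i, ?_⟩
  have hsub : univ.image φ ⊆ Icc (φ i) N := fun k hk => by
    obtain ⟨i', -, rfl⟩ := mem_image.1 hk
    exact mem_Icc.2 ⟨hi i' (mem_univ _), hle i'⟩
  have := card_le_card hsub
  rw [card_image_of_injective _ hφ, card_univ, Nat.card_Icc] at this
  have := hle i
  omega

theorem Set.BijOn.two_mul_sum_eq {N : ℕ} (h : Set.BijOn φ Set.univ (Set.Icc 1 N)) :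
    2 * ∑ i, φ i = N * (N + 1) := by
  have gauss (N : ℕ) : 2 * ∑ k ∈ Finset.Icc 1 N, k = N * (N + 1) := by
    induction N with
    | zero => simp
    | succ N ih => rw [sum_Icc_succ_top (by omega), mul_add, ih]; ring
  have hsum : ∑ i, φ i = ∑ k ∈ Finset.Icc 1 N, k :=
    sum_nbij φ (fun i _ => by simpa using h.mapsTo (Set.mem_univ i)) (by simpa using h.injOn)
      (by simpa using h.surjOn) fun _ _ => rfl
  rw [hsum, gauss]

theorem Function.Injective.bijOn_Icc {N : ℕ} (hφ : Function.Injective φ)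
    (hmem : ∀ i, φ i ∈ Set.Icc 1 N) (hcard : Fintype.card ι = N) :
    Set.BijOn φ Set.univ (Set.Icc 1 N) := by
  classical
  have himage : univ.image φ = Icc 1 N :=
    eq_of_subset_of_card_le
      (fun k hk => by obtain ⟨i, -, rfl⟩ := mem_image.1 hk; simpa using hmem i)
      (by rw [card_image_of_injective _ hφ, card_univ, hcard, Nat.card_Icc]; omega)
  simpa using (image_eq_iff_bijOn_of_card (s := univ) (f := φ) (by simp [hcard])).1 himage

end InjectiveLabels

section ChiLat

variable {α : Type*} [Fintype α] {G : SimpleGraph α} [DecidableRel G.Adj]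

theorem chiLat_eq_of_forall_le {c : ℕ}
    (hex : ∃ fv fe, IsLocalAntimagicTotal G fv fe ∧ #(univ.image (latWeight G fv fe)) ≤ c)
    (hle : ∀ fv fe, IsLocalAntimagicTotal G fv fe → c ≤ #(univ.image (latWeight G fv fe))) :
    chiLat G = c := by
  obtain ⟨fv, fe, hA, hc⟩ := hex
  have hmem : c ∈ {c | ∃ fv fe, IsLocalAntimagicTotal G fv fe ∧
      #(univ.image (latWeight G fv fe)) = c} :=
    ⟨fv, fe, hA, le_antisymm hc (hle fv fe hA)⟩
  refine le_antisymm (Nat.sInf_le hmem) (le_csInf ⟨c, hmem⟩ ?_)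
  rintro _ ⟨fv, fe, hA, rfl⟩
  exact hle fv fe hA

theorem IsLocalAntimagicTotal.latWeight_eq_or_eq {fv : α → ℕ} {fe : Sym2 α → ℕ}
    (hA : IsLocalAntimagicTotal G fv fe) (hcard : #(univ.image (latWeight G fv fe)) ≤ 2)
    {a b : α} (hab : G.Adj a b) (z : α) :
    latWeight G fv fe z = latWeight G fv fe a ∨ latWeight G fv fe z = latWeight G fv fe b := by
  have himage : {latWeight G fv fe a, latWeight G fv fe b} = univ.image (latWeight G fv fe) :=
    eq_of_subset_of_card_le (by simp [insert_subset_iff]) (by rwa [card_pair (hA.2 hab)])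
  simpa [← himage] using mem_image_of_mem (latWeight G fv fe) (mem_univ z)

end ChiLat

namespace Spider12

abbrev Vertex (m n : ℕ) := Option (Fin m ⊕ Fin n × Bool)

variable {m n : ℕ}

abbrev y (i : Fin m) : Vertex m n := some (.inl i)
abbrev u (j : Fin n) : Vertex m n := some (.inr (j, false))
abbrev v (j : Fin n) : Vertex m n := some (.inr (j, true))

theorem u_injective : (u : Fin n → Vertex m n).Injective := fun _ _ h => by simpa using h

theorem v_injective : (v : Fin n → Vertex m n).Injective := fun _ _ h => by simpa using h

theorem adj_none_y (i : Fin m) : (spider12 m n).Adj none (y i) := by simp [spider12R]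

theorem adj_none_u (j : Fin n) : (spider12 m n).Adj none (u j) := by simp [spider12R]

theorem adj_u_v (j : Fin n) : (spider12 m n).Adj (u j) (v j) := by simp [spider12R]

theorem neighborFinset_none :
    (spider12 m n).neighborFinset none = univ.image y ∪ univ.image u := by
  ext (_ | i | ⟨j, _ | _⟩) <;> simp [spider12R]

theorem neighborFinset_y (i : Fin m) : (spider12 m n).neighborFinset (y i) = {none} := by
  ext (_ | i | ⟨j, _ | _⟩) <;> simp [spider12R]

theorem neighborFinset_u (j : Fin n) : (spider12 m n).neighborFinset (u j) = {none, v j} := by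
  ext (_ | i | ⟨j', _ | _⟩) <;> simp [spider12R, eq_comm]

theorem neighborFinset_v (j : Fin n) : (spider12 m n).neighborFinset (v j) = {u j} := by
  ext (_ | i | ⟨j', _ | _⟩) <;> simp [spider12R, eq_comm]

section Weights

variable (fv : Vertex m n → ℕ) (fe : Sym2 (Vertex m n) → ℕ)

theorem latWeight_none : latWeight (spider12 m n) fv fe none =
    fv none + ∑ i, fe s(none, y i) + ∑ j, fe s(none, u j) := by
  rw [latWeight, neighborFinset_none, sum_union, sum_image, sum_image, add_assoc]
  all_goals simp [disjoint_left, Function.Injective]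

theorem latWeight_y (i : Fin m) :
    latWeight (spider12 m n) fv fe (y i) = fv (y i) + fe s(none, y i) := by
  rw [latWeight, neighborFinset_y, sum_singleton, Sym2.eq_swap]

theorem latWeight_u (j : Fin n) : latWeight (spider12 m n) fv fe (u j) =
    fv (u j) + fe s(none, u j) + fe s(u j, v j) := by
  rw [latWeight, neighborFinset_u, sum_pair (by simp), Sym2.eq_swap, add_assoc]

theorem latWeight_v (j : Fin n) :
    latWeight (spider12 m n) fv fe (v j) = fv (v j) + fe s(u j, v j) := by
  rw [latWeight, neighborFinset_v, sum_singleton, Sym2.eq_swap]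

end Weights

/-- Each non-central vertex indexes the edge to its neighbour nearer the centre. -/
def parentEdge : Fin m ⊕ Fin n × Bool → (spider12 m n).edgeSet
  | .inl i => ⟨s(none, y i), adj_none_y i⟩
  | .inr (j, false) => ⟨s(none, u j), adj_none_u j⟩
  | .inr (j, true) => ⟨s(u j, v j), adj_u_v j⟩

theorem parentEdge_bijective : (parentEdge : _ → (spider12 m n).edgeSet).Bijective := by
  constructor
  · rintro (i | ⟨j, _ | _⟩) (i' | ⟨j', _ | _⟩) h <;> simp_all [parentEdge, Subtype.ext_iff]
  · rintro ⟨e, he⟩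
    induction e using Sym2.ind with
    | _ a b =>
      rcases a with _ | i | ⟨j, _ | _⟩ <;> rcases b with _ | i' | ⟨j', _ | _⟩ <;>
        simp [spider12R] at he <;>
        simp_all [parentEdge, Subtype.ext_iff, Sum.exists, Prod.exists]

theorem card_edgeFinset : (spider12 m n).edgeFinset.card = m + 2 * n := by
  rw [SimpleGraph.edgeFinset_card,
    ← Fintype.card_congr (Equiv.ofBijective _ parentEdge_bijective)]
  simp
  ring

/-- The labels of a total labeling, with `V(G) ∪ E(G)` indexed through `parentEdge`. -/
def label (fv : Vertex m n → ℕ) (fe : Sym2 (Vertex m n) → ℕ) :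
    Vertex m n ⊕ (Fin m ⊕ Fin n × Bool) → ℕ :=
  Sum.elim fv fun k => fe (parentEdge k)

theorem isTotalLabeling_iff {fv : Vertex m n → ℕ} {fe : Sym2 (Vertex m n) → ℕ} :
    IsTotalLabeling (spider12 m n) fv fe ↔
      Set.BijOn (label fv fe) Set.univ (Set.Icc 1 (2 * m + 4 * n + 1)) := by
  have hbij : (Sum.map (id : Vertex m n → _) (parentEdge (m := m) (n := n))).Bijective :=
    Function.bijective_id.sumMap parentEdge_bijective
  have hN : Fintype.card (Vertex m n) + (spider12 m n).edgeFinset.card = 2 * m + 4 * n + 1 := by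
    simp [card_edgeFinset]
    ring
  rw [IsTotalLabeling, hN, ← Set.image_univ_of_surjective hbij.surjective,
    ← Set.bijOn_comp_iff hbij.injective.injOn, Sum.elim_comp_map]
  rfl

section Construction

variable (m n : ℕ)

def vertexLabel : Vertex m n → ℕ
  | none => 2 * m + 4 * n + 1
  | some (.inl i) => i + 1
  | some (.inr (j, false)) => 2 * m + 2 * n + 1 + j
  | some (.inr (j, true)) => m + 2 * j + 1

/-- `arcLabel a b` is the label of the edge `ab` when `a` is the neighbour of `b` nearer the
centre. -/
def arcLabel : Vertex m n → Vertex m n → ℕ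
  | none, some (.inl i) => 2 * m + 2 * n - i
  | none, some (.inr (j, false)) => 2 * m + 3 * n + 1 + j
  | some (.inr (j, false)), some (.inr (j', true)) => if j = j' then m + 2 * n - 2 * j else 0
  | _, _ => 0

def edgeLabel : Sym2 (Vertex m n) → ℕ :=
  Sym2.lift ⟨fun a b => arcLabel m n a b + arcLabel m n b a, fun _ _ => add_comm _ _⟩

theorem edgeLabel_none_y (i : Fin m) : edgeLabel m n s(none, y i) = 2 * m + 2 * n - i := by
  simp [edgeLabel, arcLabel]

theorem edgeLabel_none_u (j : Fin n) : edgeLabel m n s(none, u j) = 2 * m + 3 * n + 1 + j := by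
  simp [edgeLabel, arcLabel]

theorem edgeLabel_u_v (j : Fin n) : edgeLabel m n s(u j, v j) = m + 2 * n - 2 * j := by
  simp [edgeLabel, arcLabel]

theorem label_vertexLabel_injective : (label (vertexLabel m n) (edgeLabel m n)).Injective := by
  rintro ((_ | i | ⟨j, _ | _⟩) | i | ⟨j, _ | _⟩) ((_ | i' | ⟨j', _ | _⟩) | i' | ⟨j', _ | _⟩) h <;>
    simp only [label, parentEdge, Sum.elim_inl, Sum.elim_inr, vertexLabel, edgeLabel_none_y,
      edgeLabel_none_u, edgeLabel_u_v] at h <;>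
    simp only [Sum.inl.injEq, Sum.inr.injEq, Option.some.injEq, Prod.mk.injEq, reduceCtorEq,
      Fin.ext_iff, and_true] <;>
    omega

theorem label_vertexLabel_mem_Icc (t : Vertex m n ⊕ (Fin m ⊕ Fin n × Bool)) :
    label (vertexLabel m n) (edgeLabel m n) t ∈ Set.Icc 1 (2 * m + 4 * n + 1) := by
  rcases t with (_ | i | ⟨j, _ | _⟩) | i | ⟨j, _ | _⟩ <;>
    simp only [label, parentEdge, Sum.elim_inl, Sum.elim_inr, vertexLabel, edgeLabel_none_y,
      edgeLabel_none_u, edgeLabel_u_v, Set.mem_Icc] <;>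
    omega

theorem isTotalLabeling_vertexLabel :
    IsTotalLabeling (spider12 m n) (vertexLabel m n) (edgeLabel m n) :=
  isTotalLabeling_iff.2 <|
    (label_vertexLabel_injective m n).bijOn_Icc (label_vertexLabel_mem_Icc m n) (by simp; ring)

theorem latWeight_vertexLabel_y (i : Fin m) :
    latWeight (spider12 m n) (vertexLabel m n) (edgeLabel m n) (y i) = 2 * m + 2 * n + 1 := by
  rw [latWeight_y, vertexLabel, edgeLabel_none_y]
  omega

theorem latWeight_vertexLabel_u (j : Fin n) :
    latWeight (spider12 m n) (vertexLabel m n) (edgeLabel m n) (u j) = 5 * m + 7 * n + 2 := by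
  rw [latWeight_u, vertexLabel, edgeLabel_none_u, edgeLabel_u_v]
  omega

theorem latWeight_vertexLabel_v (j : Fin n) :
    latWeight (spider12 m n) (vertexLabel m n) (edgeLabel m n) (v j) = 2 * m + 2 * n + 1 := by
  rw [latWeight_v, vertexLabel, edgeLabel_u_v]
  omega

theorem lt_latWeight_vertexLabel_none (hm : 1 ≤ m) (hn : 1 ≤ n) :
    5 * m + 7 * n + 2 < latWeight (spider12 m n) (vertexLabel m n) (edgeLabel m n) none := by
  have hy := single_le_sum (fun i _ => Nat.zero_le (edgeLabel m n s(none, y i)))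
    (mem_univ (⟨0, hm⟩ : Fin m))
  have hu := single_le_sum (fun j _ => Nat.zero_le (edgeLabel m n s(none, u j)))
    (mem_univ (⟨0, hn⟩ : Fin n))
  rw [edgeLabel_none_y] at hy
  rw [edgeLabel_none_u] at hu
  rw [latWeight_none, vertexLabel]
  omega

theorem isLocalAntimagicTotal_vertexLabel (hm : 1 ≤ m) (hn : 1 ≤ n) :
    IsLocalAntimagicTotal (spider12 m n) (vertexLabel m n) (edgeLabel m n) := by
  refine ⟨isTotalLabeling_vertexLabel m n, ?_⟩
  have hx := lt_latWeight_vertexLabel_none m n hm hn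
  intro a b hab
  rcases a with _ | i | ⟨j, _ | _⟩ <;> rcases b with _ | i' | ⟨j', _ | _⟩ <;>
    simp [spider12R] at hab <;>
    simp only [latWeight_vertexLabel_y, latWeight_vertexLabel_u, latWeight_vertexLabel_v] <;>
    omega

theorem card_image_latWeight_vertexLabel_le :
    #(univ.image (latWeight (spider12 m n) (vertexLabel m n) (edgeLabel m n))) ≤ 3 := by
  refine (card_le_card (t := {latWeight (spider12 m n) (vertexLabel m n) (edgeLabel m n) none,
    2 * m + 2 * n + 1, 5 * m + 7 * n + 2}) ?_).trans card_le_three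
  intro t ht
  obtain ⟨_ | i | ⟨j, _ | _⟩, -, rfl⟩ := mem_image.1 ht <;>
    simp [latWeight_vertexLabel_y, latWeight_vertexLabel_u, latWeight_vertexLabel_v]

end Construction

section TwoWeights

variable {fv : Vertex m n → ℕ} {fe : Sym2 (Vertex m n) → ℕ}

theorem label_injective (hT : IsTotalLabeling (spider12 m n) fv fe) : (label fv fe).Injective :=
  Set.injOn_univ.1 (isTotalLabeling_iff.1 hT).injOn

theorem label_mem_Icc (hT : IsTotalLabeling (spider12 m n) fv fe)
    (t : Vertex m n ⊕ (Fin m ⊕ Fin n × Bool)) :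
    label fv fe t ∈ Set.Icc 1 (2 * m + 4 * n + 1) :=
  (isTotalLabeling_iff.1 hT).mapsTo (Set.mem_univ t)

/-- The centre and its incident edges. -/
def hubItem : Option (Fin m ⊕ Fin n) → Vertex m n ⊕ (Fin m ⊕ Fin n × Bool)
  | none => .inl none
  | some (.inl i) => .inr (.inl i)
  | some (.inr j) => .inr (.inr (j, false))

theorem hubItem_injective : (hubItem (m := m) (n := n)).Injective := by
  rintro (_ | i | j) (_ | i' | j') h <;> simp_all [hubItem]

theorem sum_label_hubItem :
    ∑ o, label fv fe (hubItem o) = latWeight (spider12 m n) fv fe none := by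
  simp [Fintype.sum_option, Fintype.sum_sum_type, hubItem, label, parentEdge, latWeight_none,
    add_assoc]

theorem card_mul_le_two_mul_latWeight_none (hT : IsTotalLabeling (spider12 m n) fv fe) :
    (m + n + 1) * (m + n + 2) ≤ 2 * latWeight (spider12 m n) fv fe none := by
  have := ((label_injective hT).comp hubItem_injective).card_mul_card_add_one_le_two_mul_sum
    fun o => (label_mem_Icc hT _).1
  simp only [Function.comp_apply, sum_label_hubItem, Fintype.card_option, Fintype.card_sum,
    Fintype.card_fin] at this
  linarith

theorem latWeight_none_lt (hT : IsTotalLabeling (spider12 m n) fv fe) (j : Fin n)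
    (hv : latWeight (spider12 m n) fv fe (v j) = latWeight (spider12 m n) fv fe none) :
    latWeight (spider12 m n) fv fe none < 2 * (2 * m + 4 * n + 1) := by
  have hv' := (label_mem_Icc hT (.inl (v j))).2
  have huv := (label_mem_Icc hT (.inr (.inr (j, true)))).2
  have hne := (label_injective hT).ne (a₁ := .inl (v j)) (a₂ := .inr (.inr (j, true))) (by simp)
  simp only [label, parentEdge, Sum.elim_inl, Sum.elim_inr] at hv' huv hne
  rw [← hv, latWeight_v]
  omega

theorem card_mul_le_two_mul_latWeight_u (hT : IsTotalLabeling (spider12 m n) fv fe)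
    (hn : 1 ≤ n) {b : ℕ} (hu : ∀ j, latWeight (spider12 m n) fv fe (u j) = b)
    (hv : ∀ j, latWeight (spider12 m n) fv fe (v j) = latWeight (spider12 m n) fv fe none) :
    (m + n + 2) * (m + n + 3) + 2 * n ≤ 2 * b + 2 * (2 * m + 4 * n + 1) := by
  have : Nonempty (Fin n) := ⟨⟨0, hn⟩⟩
  obtain ⟨j, hj⟩ := ((label_injective hT).comp
    (Sum.inl_injective.comp v_injective)).exists_add_card_le fun _ => (label_mem_Icc hT _).2
  have hinj :
      (fun o : Option (Option (Fin m ⊕ Fin n)) => o.elim (.inl (u j)) hubItem).Injective :=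
    Option.injective_iff.2
      ⟨hubItem_injective, by rintro ⟨_ | i | j', h⟩ <;> simp [hubItem] at h⟩
  have hbound := ((label_injective hT).comp hinj).card_mul_card_add_one_le_two_mul_sum
    fun o => (label_mem_Icc hT _).1
  have hxu := (label_mem_Icc hT (.inr (.inr (j, false)))).1
  simp only [Function.comp_apply, Fintype.card_fin] at hj
  rw [Fintype.sum_option] at hbound
  simp only [Function.comp_apply, Option.elim_none, Option.elim_some, sum_label_hubItem,
    Fintype.card_option, Fintype.card_sum, Fintype.card_fin] at hbound
  simp only [label, parentEdge, Sum.elim_inl, Sum.elim_inr] at hj hbound hxu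
  -- `b + f(v j) = f(u j) + f(x u j) + a` with `f(v j) ≤ N + 1 - n` and `f(x u j) ≥ 1`
  have hwu := hu j
  have hwv := hv j
  rw [latWeight_u] at hwu
  rw [latWeight_v] at hwv
  nlinarith

theorem sum_label : ∑ t, label fv fe t = fv none + ∑ i, (fv (y i) + fe s(none, y i)) +
    ∑ j, (fv (v j) + fe s(u j, v j)) + ∑ j, fv (u j) + ∑ j, fe s(none, u j) := by
  simp only [label, parentEdge, Fintype.sum_sum_type, Fintype.sum_option, Fintype.sum_prod_type,
    Fintype.sum_bool, Sum.elim_inl, Sum.elim_inr, sum_add_distrib]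
  ring

theorem total_sum_bound_of_two_weights (hT : IsTotalLabeling (spider12 m n) fv fe) {b : ℕ}
    (hy : ∀ i, latWeight (spider12 m n) fv fe (y i) = b)
    (hv : ∀ j, latWeight (spider12 m n) fv fe (v j) = latWeight (spider12 m n) fv fe none) :
    2 * m * b + 2 * n * latWeight (spider12 m n) fv fe none + (m + 2 * n + 1) * (m + 2 * n + 2) +
        (n + 1) * (n + 2) ≤
      (2 * m + 4 * n + 1) * (2 * m + 4 * n + 2) + 2 * latWeight (spider12 m n) fv fe none := by
  have htotal := (isTotalLabeling_iff.1 hT).two_mul_sum_eq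
  have hY : ∑ i, (fv (y i) + fe s(none, y i)) = m * b := by
    simp [← latWeight_y, hy]
  have hV : ∑ j, (fv (v j) + fe s(u j, v j)) = n * latWeight (spider12 m n) fv fe none := by
    simp [← latWeight_v, hv]
  have hU := ((label_injective hT).comp ((Sum.inl_injective.comp u_injective).sumElim
    hubItem_injective (by rintro j (_ | i | j') <;> simp [hubItem]))
    ).card_mul_card_add_one_le_two_mul_sum fun o => (label_mem_Icc hT _).1
  have hQ := ((label_injective hT).comp (hubItem_injective.comp
    (Option.map_injective Sum.inr_injective))).card_mul_card_add_one_le_two_mul_sum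
    fun o => (label_mem_Icc hT _).1
  rw [Fintype.sum_sum_type] at hU
  rw [Fintype.sum_option] at hQ
  simp only [Function.comp_apply, Sum.elim_inl, Sum.elim_inr, sum_label_hubItem,
    Fintype.card_option, Fintype.card_sum, Fintype.card_fin] at hU
  simp only [Function.comp_apply, Option.map_none, Option.map_some, Fintype.card_option,
    Fintype.card_fin] at hQ
  simp only [label, parentEdge, hubItem, Sum.elim_inl, Sum.elim_inr] at hU hQ
  rw [sum_label, hY, hV] at htotal
  nlinarith

theorem latWeight_eq_of_card_image_le_two (hA : IsLocalAntimagicTotal (spider12 m n) fv fe)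
    (hcard : #(univ.image (latWeight (spider12 m n) fv fe)) ≤ 2) (i₀ : Fin m) :
    (∀ i, latWeight (spider12 m n) fv fe (y i) = latWeight (spider12 m n) fv fe (y i₀)) ∧
    (∀ j, latWeight (spider12 m n) fv fe (u j) = latWeight (spider12 m n) fv fe (y i₀)) ∧
    ∀ j, latWeight (spider12 m n) fv fe (v j) = latWeight (spider12 m n) fv fe none := by
  have hw := hA.latWeight_eq_or_eq hcard (adj_none_y i₀)
  have hu (j : Fin n) := (hw (u j)).resolve_left (hA.2 (adj_none_u j)).symm
  refine ⟨fun i => (hw (y i)).resolve_left (hA.2 (adj_none_y i)).symm, hu, fun j => ?_⟩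
  refine (hw (v j)).resolve_right fun h => hA.2 (adj_u_v j) ?_
  rw [hu, h]

theorem false_of_two_weight_bounds (m n a b : ℕ) (hm : 1 ≤ m) (hn : 1 ≤ n)
    (h : 10 ≤ m + n ∨ (m, n) ∈
      ([(6, 1), (5, 2), (7, 1), (6, 2), (5, 3), (4, 4), (8, 1), (2, 7), (3, 6), (4, 5),
        (5, 4), (6, 3), (7, 2), (4, 1), (4, 3), (5, 1), (1, 8)] : List (ℕ × ℕ)))
    (hx : (m + n + 1) * (m + n + 2) ≤ 2 * a) (hx' : a < 2 * (2 * m + 4 * n + 1))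
    (hu : (m + n + 2) * (m + n + 3) + 2 * n ≤ 2 * b + 2 * (2 * m + 4 * n + 1))
    (htotal : 2 * m * b + 2 * n * a + (m + 2 * n + 1) * (m + 2 * n + 2) + (n + 1) * (n + 2) ≤
      (2 * m + 4 * n + 1) * (2 * m + 4 * n + 2) + 2 * a) : False := by
  simp only [List.mem_cons, List.not_mem_nil, or_false, Prod.mk.injEq] at h
  -- For `m + n ≥ 13` the two bounds on `a` already conflict; smaller pairs are checked one by one.
  rcases le_or_gt 13 (m + n) with hs | hs
  · nlinarith
  · have : m ≤ 11 := by omega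
    have : n ≤ 11 := by omega
    interval_cases m <;> interval_cases n <;> omega

theorem two_lt_card_image_latWeight (hm : 1 ≤ m) (hn : 1 ≤ n)
    (h : 10 ≤ m + n ∨ (m, n) ∈
      ([(6, 1), (5, 2), (7, 1), (6, 2), (5, 3), (4, 4), (8, 1), (2, 7), (3, 6), (4, 5),
        (5, 4), (6, 3), (7, 2), (4, 1), (4, 3), (5, 1), (1, 8)] : List (ℕ × ℕ)))
    (hA : IsLocalAntimagicTotal (spider12 m n) fv fe) :
    2 < #(univ.image (latWeight (spider12 m n) fv fe)) := by
  by_contra! hcard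
  obtain ⟨hy, hu, hv⟩ := latWeight_eq_of_card_image_le_two hA hcard ⟨0, hm⟩
  exact false_of_two_weight_bounds m n _ _ hm hn h (card_mul_le_two_mul_latWeight_none hA.1)
    (latWeight_none_lt hA.1 ⟨0, hn⟩ (hv _)) (card_mul_le_two_mul_latWeight_u hA.1 hn hu hv)
    (total_sum_bound_of_two_weights hA.1 hy hv)

end TwoWeights

end Spider12

/-- If `m + n ≥ 10`, or `(m,n)` is one of the listed exceptional pairs, then the spider
`Sp(1^[m], 2^[n])` has local antimagic total chromatic number `3`. -/
theorem chiLat_spider12_eq_three (m n : ℕ) (hm : 1 ≤ m) (hn : 1 ≤ n)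
    (h : 10 ≤ m + n ∨ (m, n) ∈
      ([(6, 1), (5, 2), (7, 1), (6, 2), (5, 3), (4, 4), (8, 1), (2, 7), (3, 6), (4, 5),
        (5, 4), (6, 3), (7, 2), (4, 1), (4, 3), (5, 1), (1, 8)] : List (ℕ × ℕ))) :
    chiLat (spider12 m n) = 3 :=
  chiLat_eq_of_forall_le
    ⟨_, _, Spider12.isLocalAntimagicTotal_vertexLabel m n hm hn,
      Spider12.card_image_latWeight_vertexLabel_le m n⟩
    fun _ _ hA => Spider12.two_lt_card_image_latWeight hm hn h hA
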